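/- Let X_1,…,X_n be an IID bounded sequence with constants c_1, δ_1, c_2, δ_2 (c_1, c_2 > 0) and IID bounding sequence Y_1,…,Y_n, and suppose the values X_1,…,X_n are pairwise distinct and the values Y_1,…,Y_n are pairwise distinct. Then for every α ∈ (0,1) with n·α ∈ ℕ, the empirical upper quantile functions satisfy c_1·Q̂_{Y_n}(α) + δ_1 ≤ Q̂_{X_n}(α) ≤ c_2·Q̂_{Y_n}(α) + δ_2. -/

import Mathlib

open MeasureTheory ProbabilityTheory

/-- Distribution function `F(x) = P(X ≤ x)` of a real random variable. -/
noncomputable def distFun {Ω : Type*} [MeasurableSpace Ω] (μ : Measure Ω) (X : Ω → ℝ) :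
    ℝ → ℝ :=
  fun x => (μ {ω | X ω ≤ x}).toReal

/-- Upper quantile function `Q(p) = sup {x : F x ≤ p}`. -/
noncomputable def upperQuantile (F : ℝ → ℝ) (p : ℝ) : ℝ :=
  sSup {x | F x ≤ p}

/-- Lower quantile function `Q⁻(p) = sup {x : F x < p}`. -/
noncomputable def lowerQuantile (F : ℝ → ℝ) (p : ℝ) : ℝ :=
  sSup {x | F x < p}

/-- Empirical distribution function of the observations `z 1, …, z i`. -/
noncomputable def empDistFun (z : ℕ → ℝ) (i : ℕ) : ℝ → ℝ :=
  fun x => (1 / (i : ℝ)) * ∑ j ∈ Finset.Icc 1 i, (if z j ≤ x then (1 : ℝ) else 0)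

/-- The boundary `g_i = 0.85 √((1/i)(log log (e i) + 0.8 log (1612/δ)))`. -/
noncomputable def gBound (δ : ℝ) (i : ℕ) : ℝ :=
  0.85 * Real.sqrt ((1 / (i : ℝ)) *
    (Real.log (Real.log (Real.exp 1 * i)) + 0.8 * Real.log (1612 / δ)))

/-!
The comparison is deterministic, pathwise: if `z j ≤ c * w j + δ` for every observation, then
every point `y` with `F̂_w(y) ≤ α` is mapped by `y ↦ c * y + δ` to a point `x` with
`F̂_z(x) ≤ F̂_w(y) ≤ α`, so taking suprema gives `Q̂_z(α) ≤ c * Q̂_w(α) + δ`. The lower bound is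
the same statement for the inverse affine map. Outside a null set the coupling holds for all
indices at once, which gives the almost sure statement.
-/

theorem upperQuantile_le_affine {F G : ℝ → ℝ} {p c δ : ℝ} (hc : 0 < c)
    (hF : {x | F x ≤ p}.Nonempty) (hG : BddAbove {y | G y ≤ p})
    (hFG : ∀ y, G y ≤ F (c * y + δ)) :
    upperQuantile F p ≤ c * upperQuantile G p + δ := by
  refine csSup_le hF fun x hx => ?_
  have hy : (x - δ) / c ∈ {y | G y ≤ p} := by
    refine (hFG _).trans ?_
    rwa [mul_div_cancel₀ _ hc.ne', sub_add_cancel]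
  have := mul_le_mul_of_nonneg_left (le_csSup hG hy) hc.le
  rw [mul_div_cancel₀ _ hc.ne'] at this
  unfold upperQuantile
  linarith

section empDistFun

variable {z w : ℕ → ℝ} {n : ℕ}

theorem empDistFun_le_empDistFun {x y : ℝ} (h : ∀ j ∈ Finset.Icc 1 n, w j ≤ y → z j ≤ x) :
    empDistFun w n y ≤ empDistFun z n x := by
  unfold empDistFun
  gcongr with j hj
  split_ifs with hw hz
  · exact le_rfl
  · exact absurd (h j hj hw) hz
  · exact zero_le_one
  · exact le_rfl

theorem empDistFun_eq_zero_of_forall_lt {x : ℝ} (h : ∀ j ∈ Finset.Icc 1 n, x < z j) :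
    empDistFun z n x = 0 := by
  unfold empDistFun
  rw [Finset.sum_eq_zero fun j hj => if_neg (h j hj).not_ge, mul_zero]

theorem empDistFun_eq_one_of_forall_le {x : ℝ} (hn : 1 ≤ n)
    (h : ∀ j ∈ Finset.Icc 1 n, z j ≤ x) : empDistFun z n x = 1 := by
  unfold empDistFun
  rw [Finset.sum_congr rfl fun j hj => if_pos (h j hj), Finset.sum_const, Nat.card_Icc,
    Nat.add_sub_cancel, nsmul_eq_mul, mul_one, one_div, inv_mul_cancel₀]
  exact_mod_cast (Nat.one_le_iff_ne_zero.mp hn)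

theorem nonempty_setOf_empDistFun_le {α : ℝ} (hα : 0 ≤ α) :
    {x | empDistFun z n x ≤ α}.Nonempty := by
  obtain ⟨b, hb⟩ := ((Finset.Icc 1 n).image z).bddBelow
  refine ⟨b - 1, ?_⟩
  show empDistFun z n (b - 1) ≤ α
  rw [empDistFun_eq_zero_of_forall_lt fun j hj => ?_]
  · exact hα
  · have := hb (Finset.mem_coe.mpr (Finset.mem_image_of_mem z hj))
    linarith

theorem bddAbove_setOf_empDistFun_le {α : ℝ} (hn : 1 ≤ n) (hα : α < 1) :
    BddAbove {x | empDistFun z n x ≤ α} := by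
  obtain ⟨b, hb⟩ := ((Finset.Icc 1 n).image z).bddAbove
  refine ⟨b, fun x hx => ?_⟩
  by_contra! hbx
  have hF := empDistFun_eq_one_of_forall_le (z := z) (x := x) hn fun j hj =>
    (hb (Finset.mem_coe.mpr (Finset.mem_image_of_mem z hj))).trans hbx.le
  exact absurd (hF ▸ hx : (1 : ℝ) ≤ α) hα.not_ge

theorem upperQuantile_empDistFun_le_affine {c δ α : ℝ} (hc : 0 < c) (hn : 1 ≤ n)
    (hα : α ∈ Set.Ico (0 : ℝ) 1) (h : ∀ j ∈ Finset.Icc 1 n, z j ≤ c * w j + δ) :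
    upperQuantile (empDistFun z n) α ≤ c * upperQuantile (empDistFun w n) α + δ :=
  upperQuantile_le_affine hc (nonempty_setOf_empDistFun_le hα.1)
    (bddAbove_setOf_empDistFun_le hn hα.2) fun y =>
      empDistFun_le_empDistFun fun j hj hwy =>
        (h j hj).trans (by gcongr)

theorem affine_upperQuantile_empDistFun_le {c δ α : ℝ} (hc : 0 < c) (hn : 1 ≤ n)
    (hα : α ∈ Set.Ico (0 : ℝ) 1) (h : ∀ j ∈ Finset.Icc 1 n, c * w j + δ ≤ z j) :
    c * upperQuantile (empDistFun w n) α + δ ≤ upperQuantile (empDistFun z n) α := by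
  have hinv := upperQuantile_empDistFun_le_affine (z := w) (w := z) (c := c⁻¹) (δ := -δ / c)
    (inv_pos.mpr hc) hn hα fun j hj => by
      rw [← mul_le_mul_iff_right₀ hc]
      field_simp
      linarith [h j hj]
  have := mul_le_mul_of_nonneg_left hinv hc.le
  field_simp at this
  linarith

end empDistFun

theorem iidBounded_upperQuantile_comparison_general
    {Ω : Type*} [MeasurableSpace Ω] (μ : Measure Ω)
    (X Y : ℕ → Ω → ℝ)
    (c₁ δ₁ c₂ δ₂ : ℝ) (hc₁ : 0 < c₁) (hc₂ : 0 < c₂)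
    (hbound : ∀ i, ∀ᵐ ω ∂μ, c₁ * Y i ω + δ₁ ≤ X i ω ∧ X i ω ≤ c₂ * Y i ω + δ₂)
    (n : ℕ) (hn : 1 ≤ n)
    (α : ℝ) (hα : α ∈ Set.Ioo (0 : ℝ) 1) :
    ∀ᵐ ω ∂μ,
      c₁ * upperQuantile (empDistFun (fun j => Y j ω) n) α + δ₁ ≤
          upperQuantile (empDistFun (fun j => X j ω) n) α ∧
        upperQuantile (empDistFun (fun j => X j ω) n) α ≤
          c₂ * upperQuantile (empDistFun (fun j => Y j ω) n) α + δ₂ := by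
  have hα' : α ∈ Set.Ico (0 : ℝ) 1 := Set.Ioo_subset_Ico_self hα
  filter_upwards [ae_all_iff.mpr hbound] with ω hω
  exact ⟨affine_upperQuantile_empDistFun_le hc₁ hn hα' fun j _ => (hω j).1,
    upperQuantile_empDistFun_le_affine hc₂ hn hα' fun j _ => (hω j).2⟩

/-- Lemma `lem:quantile:essentialIID`, upper quantile part: for an IID bounded sequence
`X_1, …, X_n` with bounding sequence `Y_1, …, Y_n` (with pairwise distinct values), for every
`α ∈ (0,1)` with `n·α ∈ ℕ`,
`c₁ Q̂_{Y_n}(α) + δ₁ ≤ Q̂_{X_n}(α) ≤ c₂ Q̂_{Y_n}(α) + δ₂` almost surely. -/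
theorem iidBounded_upperQuantile_comparison
    {Ω : Type*} [MeasurableSpace Ω] (μ : Measure Ω) [IsProbabilityMeasure μ]
    (X Y : ℕ → Ω → ℝ) (hXmeas : ∀ i, Measurable (X i)) (hYmeas : ∀ i, Measurable (Y i))
    (c₁ δ₁ c₂ δ₂ : ℝ) (hc₁ : 0 < c₁) (hc₂ : 0 < c₂)
    (hXindep : iIndepFun X μ)
    (hYindep : iIndepFun Y μ)
    (hYident : ∀ i j, IdentDistrib (Y i) (Y j) μ μ)
    (hbound : ∀ i, ∀ᵐ ω ∂μ, c₁ * Y i ω + δ₁ ≤ X i ω ∧ X i ω ≤ c₂ * Y i ω + δ₂)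
    (n : ℕ) (hn : 1 ≤ n)
    (hXdistinct : ∀ᵐ ω ∂μ, ∀ i ∈ Finset.Icc 1 n, ∀ j ∈ Finset.Icc 1 n, i ≠ j → X i ω ≠ X j ω)
    (hYdistinct : ∀ᵐ ω ∂μ, ∀ i ∈ Finset.Icc 1 n, ∀ j ∈ Finset.Icc 1 n, i ≠ j → Y i ω ≠ Y j ω)
    (α : ℝ) (hα : α ∈ Set.Ioo (0 : ℝ) 1) (hnα : ∃ k : ℕ, (n : ℝ) * α = k) :
    ∀ᵐ ω ∂μ,
      c₁ * upperQuantile (empDistFun (fun j => Y j ω) n) α + δ₁ ≤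
          upperQuantile (empDistFun (fun j => X j ω) n) α ∧
        upperQuantile (empDistFun (fun j => X j ω) n) α ≤
          c₂ * upperQuantile (empDistFun (fun j => Y j ω) n) α + δ₂ :=
  iidBounded_upperQuantile_comparison_general μ X Y c₁ δ₁ c₂ δ₂ hc₁ hc₂ hbound n hn α hα
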